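/- Let Φ be the non-selective measurement channel associated with a complete family of pairwise orthogonal projections {P_a} on ℂ^n, let ρ be a quantum state on ℂ^n, and let d ≥ 1. Then ‖ρ ⊗ E₀₀ − ρ ⊗ (1_d/d)‖₁ = 2(d−1)/d, and the change in trace-distance conditional information satisfies ‖ρ ⊗ E₀₀ − Φ(ρ) ⊗ (1_d/d)‖₁ − ‖ρ ⊗ E₀₀ − ρ ⊗ (1_d/d)‖₁ = ‖ρ − Φ(ρ)/d‖₁ − (d−1)/d. -/

import Mathlib

open Matrix Kronecker
open scoped ComplexOrder

noncomputable section

variable {n : Type*} [Fintype n] [DecidableEq n]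

/-- `|X| = (X† X)^{1/2}`, the positive semidefinite absolute value of a matrix. -/
def matAbs (X : Matrix n n ℂ) : Matrix n n ℂ :=
  ((Matrix.posSemidef_conjTranspose_mul_self X).1.eigenvectorUnitary : Matrix n n ℂ) *
    Matrix.diagonal ((↑) ∘ (√·) ∘ (Matrix.posSemidef_conjTranspose_mul_self X).1.eigenvalues) *
    (star (Matrix.posSemidef_conjTranspose_mul_self X).1.eigenvectorUnitary : Matrix n n ℂ)

/-- `Tr |X|^p`, with the `p`-th power taken through the functional calculus. -/
def traceAbsPow (p : ℝ) (X : Matrix n n ℂ) : ℝ :=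
  (Matrix.trace (cfc (fun x : ℝ => x ^ p) (matAbs X))).re

/-- The Schatten `p`-norm `‖X‖_p = (Tr |X|^p)^(1/p)`. -/
def schatten (p : ℝ) (X : Matrix n n ℂ) : ℝ :=
  (traceAbsPow p X) ^ (1 / p)

/-- Matrix square root via the functional calculus (agrees with the positive semidefinite
square root on positive semidefinite matrices). -/
def msqrt (X : Matrix n n ℂ) : Matrix n n ℂ := cfc Real.sqrt X

/-- Matrix natural logarithm via the functional calculus. -/
def mlog (X : Matrix n n ℂ) : Matrix n n ℂ := cfc Real.log X

/-- Von Neumann entropy `S(ρ) = -Tr(ρ log ρ)`. -/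
def vnEntropy (ρ : Matrix n n ℂ) : ℝ := -(Matrix.trace (ρ * mlog ρ)).re

/-- Relative entropy `S(ρ‖σ) = Tr(ρ log ρ) - Tr(ρ log σ)`. -/
def relEnt (ρ σ : Matrix n n ℂ) : ℝ :=
  (Matrix.trace (ρ * mlog ρ)).re - (Matrix.trace (ρ * mlog σ)).re

/-- Uhlmann fidelity `F(ρ,σ) = (Tr|√σ √ρ|)²`. -/
def fidelity (ρ σ : Matrix n n ℂ) : ℝ :=
  ((Matrix.trace (matAbs (msqrt σ * msqrt ρ))).re) ^ 2

/-- Partial trace over the second factor. -/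
def ptraceE {S E : Type*} [Fintype E] (Ω : Matrix (S × E) (S × E) ℂ) : Matrix S S ℂ :=
  Matrix.of fun s s' => ∑ e, Ω (s, e) (s', e)

/-- Partial trace over the first factor. -/
def ptraceS {S E : Type*} [Fintype S] (Ω : Matrix (S × E) (S × E) ℂ) : Matrix E E ℂ :=
  Matrix.of fun e e' => ∑ s, Ω (s, e) (s, e')

/-!
Both `E₀₀` and `1_d/d` are diagonal, so `ρ ⊗ E₀₀ - σ ⊗ 1_d/d` is block diagonal, with block
`ρ - σ/d` in position `0` and `-σ/d` in the other `d - 1` positions. The trace norm is additive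
over blocks and `‖-σ/d‖₁ = 1/d` for a state `σ`, hence
`‖ρ ⊗ E₀₀ - σ ⊗ 1_d/d‖₁ = ‖ρ - σ/d‖₁ + (d - 1)/d` for every state `σ`. Both claims follow by
taking `σ = ρ`, where `‖ρ - ρ/d‖₁ = (d - 1)/d`, and `σ = Φ(ρ)`, which is again a state.
-/

open scoped MatrixOrder

section TraceNorm

variable {m : Type*} [Fintype m] [DecidableEq m]

lemma matAbs_eq_cfcAbs (X : Matrix m m ℂ) : matAbs X = CFC.abs X := by
  have hX := posSemidef_conjTranspose_mul_self X
  rw [CFC.abs, CFC.sqrt_eq_cfc, cfc_nnreal_eq_real _ (star X * X), star_eq_conjTranspose,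
    hX.1.cfc_eq, IsHermitian.cfc, Unitary.conjStarAlgAut_apply, matAbs]
  congr 3
  funext i
  simp [Real.coe_sqrt, Real.coe_toNNReal', max_eq_left (hX.eigenvalues_nonneg i)]

lemma schatten_one_eq_re_trace_cfcAbs (X : Matrix m m ℂ) :
    schatten 1 X = (CFC.abs X).trace.re := by
  rw [schatten, traceAbsPow, one_div_one, Real.rpow_one, matAbs_eq_cfcAbs]
  simp_rw [Real.rpow_one]
  rw [cfc_id' ℝ (CFC.abs X) (CFC.abs_nonneg X).isSelfAdjoint]

lemma schatten_one_smul (c : ℂ) (X : Matrix m m ℂ) :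
    schatten 1 (c • X) = ‖c‖ * schatten 1 X := by
  simp only [schatten_one_eq_re_trace_cfcAbs, CFC.abs_smul, trace_smul, Complex.real_smul,
    Complex.re_ofReal_mul]

lemma Matrix.PosSemidef.schatten_one_eq {X : Matrix m m ℂ} (hX : X.PosSemidef) :
    schatten 1 X = X.trace.re := by
  rw [schatten_one_eq_re_trace_cfcAbs, CFC.abs_of_nonneg X hX.nonneg]

variable {o : Type*} [Fintype o] [DecidableEq o]

lemma Matrix.posSemidef_blockDiagonal {B : o → Matrix m m ℂ} (hB : ∀ k, (B k).PosSemidef) :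
    (blockDiagonal B).PosSemidef := by
  choose C hC using fun k => CStarAlgebra.nonneg_iff_eq_star_mul_self.mp (hB k).nonneg
  rw [funext hC, blockDiagonal_mul]
  simpa only [star_eq_conjTranspose, blockDiagonal_conjTranspose] using
    posSemidef_conjTranspose_mul_self (blockDiagonal C)

lemma cfcAbs_blockDiagonal (B : o → Matrix m m ℂ) :
    CFC.abs (blockDiagonal B) = blockDiagonal fun k => CFC.abs (B k) := by
  refine CFC.sqrt_unique ?_
    (posSemidef_blockDiagonal fun k => (CFC.abs_nonneg (B k)).posSemidef).nonneg
  rw [← blockDiagonal_mul, star_eq_conjTranspose, blockDiagonal_conjTranspose,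
    ← blockDiagonal_mul]
  simp only [CFC.abs_mul_abs, star_eq_conjTranspose]

lemma schatten_one_blockDiagonal (B : o → Matrix m m ℂ) :
    schatten 1 (blockDiagonal B) = ∑ k, schatten 1 (B k) := by
  simp only [schatten_one_eq_re_trace_cfcAbs, cfcAbs_blockDiagonal, trace_blockDiagonal,
    Complex.re_sum]

end TraceNorm

lemma schatten_one_kronecker_single_sub_kronecker_smul_one {m e : Type*} [Fintype m]
    [DecidableEq m] [Fintype e] [DecidableEq e] (ρ σ : Matrix m m ℂ) (k : e) (c : ℂ) :
    schatten 1 (ρ ⊗ₖ single k k (1 : ℂ) - σ ⊗ₖ (c • (1 : Matrix e e ℂ)))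
      = schatten 1 (ρ - c • σ) + ((Fintype.card e : ℝ) - 1) * (‖c‖ * schatten 1 σ) := by
  rw [← diagonal_single, smul_one_eq_diagonal, kronecker_diagonal, kronecker_diagonal,
    ← blockDiagonal_sub, schatten_one_blockDiagonal, Fintype.sum_eq_add_sum_compl k]
  simp only [Pi.sub_apply, op_smul_eq_smul]
  have hoff : ∀ i ∈ ({k}ᶜ : Finset e),
      schatten 1 ((Pi.single k (1 : ℂ) : e → ℂ) i • ρ - c • σ) = ‖c‖ * schatten 1 σ := by
    intro i hi
    rw [Pi.single_eq_of_ne (by simpa using hi), zero_smul, zero_sub, ← neg_smul,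
      schatten_one_smul, norm_neg]
  rw [Finset.sum_congr rfl hoff, Finset.sum_const, Finset.card_compl, Finset.card_singleton,
    Pi.single_eq_same, one_smul, nsmul_eq_mul, Nat.cast_sub (Fintype.card_pos_iff.mpr ⟨k⟩),
    Nat.cast_one]

section Measurement

variable {m ι : Type*} [Fintype m] [Fintype ι] {P : ι → Matrix m m ℂ}

lemma posSemidef_sum_mul_mul (hP : ∀ a, (P a)ᴴ = P a) {ρ : Matrix m m ℂ} (hρ : ρ.PosSemidef) :
    (∑ a, P a * ρ * P a).PosSemidef :=
  posSemidef_sum _ fun a _ => by simpa [hP a] using hρ.mul_mul_conjTranspose_same (P a)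

lemma trace_sum_mul_mul [DecidableEq m] (hP : ∀ a, P a * P a = P a) (hsum : ∑ a, P a = 1)
    (ρ : Matrix m m ℂ) :
    (∑ a, P a * ρ * P a).trace = ρ.trace := by
  simp only [trace_sum, trace_mul_cycle _ ρ, hP]
  rw [← trace_sum, ← Finset.sum_mul, hsum, one_mul]

end Measurement

theorem traceDistance_conditional_information_general
    {n ι : Type*} [Fintype n] [DecidableEq n] [Fintype ι]
    (P : ι → Matrix n n ℂ)
    (hproj : ∀ a, P a * P a = P a)
    (hherm : ∀ a, (P a)ᴴ = P a)
    (hsum : ∑ a, P a = 1)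
    (ρ : Matrix n n ℂ) (hρ : ρ.PosSemidef) (htr : ρ.trace = 1)
    (d : ℕ) (hd : 1 ≤ d) :
    schatten 1 (ρ ⊗ₖ Matrix.single (⟨0, hd⟩ : Fin d) ⟨0, hd⟩ (1 : ℂ)
        - ρ ⊗ₖ ((d : ℂ)⁻¹ • (1 : Matrix (Fin d) (Fin d) ℂ)))
      = 2 * ((d : ℝ) - 1) / (d : ℝ) ∧
    schatten 1 (ρ ⊗ₖ Matrix.single (⟨0, hd⟩ : Fin d) ⟨0, hd⟩ (1 : ℂ)
        - (∑ a, P a * ρ * P a) ⊗ₖ ((d : ℂ)⁻¹ • (1 : Matrix (Fin d) (Fin d) ℂ)))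
      - schatten 1 (ρ ⊗ₖ Matrix.single (⟨0, hd⟩ : Fin d) ⟨0, hd⟩ (1 : ℂ)
        - ρ ⊗ₖ ((d : ℂ)⁻¹ • (1 : Matrix (Fin d) (Fin d) ℂ)))
      = schatten 1 (ρ - (d : ℂ)⁻¹ • ∑ a, P a * ρ * P a) - ((d : ℝ) - 1) / (d : ℝ) := by
  have hstate {σ : Matrix n n ℂ} (hσ : σ.PosSemidef) (hσ₁ : σ.trace = 1) :
      schatten 1 (ρ ⊗ₖ single (⟨0, hd⟩ : Fin d) ⟨0, hd⟩ (1 : ℂ)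
          - σ ⊗ₖ ((d : ℂ)⁻¹ • (1 : Matrix (Fin d) (Fin d) ℂ)))
        = schatten 1 (ρ - (d : ℂ)⁻¹ • σ) + ((d : ℝ) - 1) / d := by
    rw [schatten_one_kronecker_single_sub_kronecker_smul_one, hσ.schatten_one_eq, hσ₁,
      Fintype.card_fin, norm_inv, Complex.norm_natCast, Complex.one_re]
    field_simp
  have hself : schatten 1 (ρ - (d : ℂ)⁻¹ • ρ) = ((d : ℝ) - 1) / d := by
    have hcoeff : ρ - (d : ℂ)⁻¹ • ρ = ((1 - (d : ℝ)⁻¹ : ℝ) : ℂ) • ρ := by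
      push_cast
      rw [sub_smul, one_smul]
    rw [hcoeff, schatten_one_smul, hρ.schatten_one_eq, htr, Complex.one_re,
      Complex.norm_of_nonneg (sub_nonneg.mpr (inv_le_one_of_one_le₀ (by exact_mod_cast hd)))]
    field_simp
  have hΦ := hstate (posSemidef_sum_mul_mul hherm hρ) (by rw [trace_sum_mul_mul hproj hsum, htr])
  exact ⟨by rw [hstate hρ htr, hself]; ring, by rw [hΦ, hstate hρ htr, hself]; ring⟩

/-- Trace-distance conditional information: `‖ρ ⊗ E₀₀ - ρ ⊗ 1_d/d‖₁ = 2(d-1)/d` and the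
change in conditional information is `‖ρ - Φ(ρ)/d‖₁ - (d-1)/d`. -/
theorem traceDistance_conditional_information
    {n ι : Type*} [Fintype n] [DecidableEq n] [Fintype ι]
    (P : ι → Matrix n n ℂ)
    (hproj : ∀ a, P a * P a = P a)
    (hherm : ∀ a, (P a)ᴴ = P a)
    (horth : ∀ a b, a ≠ b → P a * P b = 0)
    (hsum : ∑ a, P a = 1)
    (ρ : Matrix n n ℂ) (hρ : ρ.PosSemidef) (htr : ρ.trace = 1)
    (d : ℕ) (hd : 1 ≤ d) :
    schatten 1 (ρ ⊗ₖ Matrix.single (⟨0, hd⟩ : Fin d) ⟨0, hd⟩ (1 : ℂ)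
        - ρ ⊗ₖ ((d : ℂ)⁻¹ • (1 : Matrix (Fin d) (Fin d) ℂ)))
      = 2 * ((d : ℝ) - 1) / (d : ℝ) ∧
    schatten 1 (ρ ⊗ₖ Matrix.single (⟨0, hd⟩ : Fin d) ⟨0, hd⟩ (1 : ℂ)
        - (∑ a, P a * ρ * P a) ⊗ₖ ((d : ℂ)⁻¹ • (1 : Matrix (Fin d) (Fin d) ℂ)))
      - schatten 1 (ρ ⊗ₖ Matrix.single (⟨0, hd⟩ : Fin d) ⟨0, hd⟩ (1 : ℂ)
        - ρ ⊗ₖ ((d : ℂ)⁻¹ • (1 : Matrix (Fin d) (Fin d) ℂ)))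
      = schatten 1 (ρ - (d : ℂ)⁻¹ • ∑ a, P a * ρ * P a) - ((d : ℝ) - 1) / (d : ℝ) :=
  traceDistance_conditional_information_general P hproj hherm hsum ρ hρ htr d hd
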